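/- arXiv:2109.12593 — 5 statements merged into one kernel-verified Lean document; each statement's English description precedes it below -/
import Mathlib

section
/- Let G be a finite group, let S be a subgroup of G, and let N be a normal subgroup of G. Then m(G,S,N) = ([N_G(SN):SN] / [N_G(S):S]) · m(S, S∩N) · m°(G,S,N). -/
/-!
The double sum defining `m(G,S,N)` is the product of a sum over `U` and a sum over `V`, and the
latter is `m°(G,S,N)`. Read a subgroup `U ≤ S` as a subgroup `X` of `S`: by Dedekind's modular law
`UN = SN` becomes `X(S ∩ N) = S`, and `μ(U,S)` computed in `G` equals `μ(X,S)` computed in `S`,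
since the Möbius function only depends on the interval `[U,S]`. Hence the `U`-sum is
`|S| · m(S, S ∩ N)`, and the prefactor becomes the quotient of indices.
-/

open scoped Classical

/-- The Möbius function of the lattice of subgroups of a finite group,
with values in `ℚ`. -/
noncomputable def subgroupMoebius (G : Type*) [Group G] [Finite G]
    (A B : Subgroup G) : ℚ :=
  letI : Fintype (Subgroup G) := Fintype.ofFinite _
  letI : LocallyFiniteOrder (Subgroup G) := Fintype.toLocallyFiniteOrder
  IncidenceAlgebra.mu ℚ A B

/-- The constant `m°(G,S,N) = Σ μ(V,G)`, the sum running over all subgroups `V`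
of `G` with `S ≤ V ≤ G` and `VN = G`. -/
noncomputable def mCirc (G : Type*) [Group G] [Finite G] (S N : Subgroup G) : ℚ :=
  letI : Fintype (Subgroup G) := Fintype.ofFinite _
  ∑ V ∈ Finset.univ.filter (fun V : Subgroup G => S ≤ V ∧ V ⊔ N = ⊤),
    subgroupMoebius G V ⊤

/-- The constant `m(G,S,N) = (|N_G(SN)| / (|SN|·|N_G(S)|)) · Σ |U| μ(U,S) μ(V,G)`,
the sum running over pairs `(U,V)` with `U ≤ S ≤ V ≤ G`, `VN = G`, `UN = SN`. -/
noncomputable def mSlice (G : Type*) [Group G] [Finite G] (S N : Subgroup G) : ℚ :=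
  letI : Fintype (Subgroup G) := Fintype.ofFinite _
  ((Nat.card (Subgroup.normalizer ((S ⊔ N : Subgroup G) : Set G)) : ℚ) /
      ((Nat.card (S ⊔ N : Subgroup G) : ℚ) * (Nat.card (Subgroup.normalizer (S : Set G)) : ℚ))) *
    ∑ U ∈ Finset.univ.filter (fun U : Subgroup G => U ≤ S ∧ U ⊔ N = S ⊔ N),
      ∑ V ∈ Finset.univ.filter (fun V : Subgroup G => S ≤ V ∧ V ⊔ N = ⊤),
        (Nat.card U : ℚ) * subgroupMoebius G U S * subgroupMoebius G V ⊤

/-- Bouc's constant `m(G,N) = (1/|G|) Σ_{X ≤ G, XN = G} |X| μ(X,G)`. -/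
noncomputable def mBouc (G : Type*) [Group G] [Finite G] (N : Subgroup G) : ℚ :=
  letI : Fintype (Subgroup G) := Fintype.ofFinite _
  (1 / (Nat.card G : ℚ)) *
    ∑ X ∈ Finset.univ.filter (fun X : Subgroup G => X ⊔ N = ⊤),
      (Nat.card X : ℚ) * subgroupMoebius G X ⊤

namespace IncidenceAlgebra

variable {𝕜 α β : Type*} [AddCommGroup 𝕜] [One 𝕜]
  [PartialOrder α] [LocallyFiniteOrder α] [DecidableEq α]
  [PartialOrder β] [LocallyFiniteOrder β] [DecidableEq β]

theorem mu_apply_orderEmbedding (f : α ↪o β) {a b : α}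
    (hf : Set.Icc (f a) (f b) ⊆ Set.range f) :
    mu 𝕜 (f a) (f b) = mu 𝕜 a b := by
  rcases eq_or_ne a b with rfl | hab
  · simp
  have hIco : Finset.Ico (f a) (f b) = (Finset.Ico a b).map f.toEmbedding := by
    ext c
    simp only [Finset.mem_Ico, Finset.mem_map, RelEmbedding.coe_toEmbedding]
    constructor
    · rintro ⟨hac, hcb⟩
      obtain ⟨d, rfl⟩ := hf ⟨hac, hcb.le⟩
      exact ⟨d, ⟨f.le_iff_le.1 hac, f.lt_iff_lt.1 hcb⟩, rfl⟩
    · rintro ⟨d, ⟨had, hdb⟩, rfl⟩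
      exact ⟨f.le_iff_le.2 had, f.lt_iff_lt.2 hdb⟩
  rw [mu_eq_neg_sum_Ico_of_ne hab, mu_eq_neg_sum_Ico_of_ne (f.injective.ne hab), hIco,
    Finset.sum_map]
  congr 1
  refine Finset.sum_congr rfl fun x hx => ?_
  have hxb := (Finset.mem_Ico.1 hx).2
  exact mu_apply_orderEmbedding f
    ((Set.Icc_subset_Icc_right (f.le_iff_le.2 hxb.le)).trans hf)
termination_by (Finset.Icc a b).card
decreasing_by
  have hx' := Finset.mem_Ico.1 hx
  exact Finset.card_lt_card (Finset.Icc_ssubset_Icc_right (hx'.1.trans hx'.2.le) le_rfl hx'.2)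

end IncidenceAlgebra

namespace Subgroup

variable {G : Type*} [Group G]

theorem card_mul_relIndex {H K : Subgroup G} (hHK : H ≤ K) :
    Nat.card H * H.relIndex K = Nat.card K := by
  rw [← relIndex_bot_left, ← relIndex_bot_left]
  exact relIndex_mul_relIndex _ _ _ bot_le hHK

theorem map_subtype_subgroupOf (S : Subgroup G) (X : Subgroup S) :
    (X.map S.subtype).subgroupOf S = X :=
  comap_map_eq_self_of_injective S.subtype_injective X

theorem map_subtype_top (S : Subgroup G) : (⊤ : Subgroup S).map S.subtype = S := by
  rw [← MonoidHom.range_eq_map, range_subtype]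

theorem sup_normal_inf_assoc_of_le {U S : Subgroup G} (N : Subgroup G) [N.Normal] (hUS : U ≤ S) :
    (U ⊔ N) ⊓ S = U ⊔ N ⊓ S := by
  refine le_antisymm ?_ (le_inf (sup_le_sup_left inf_le_left U) (sup_le hUS inf_le_right))
  intro x hx
  obtain ⟨hxUN, hxS⟩ := mem_inf.1 hx
  rw [← SetLike.mem_coe, mul_normal] at hxUN
  obtain ⟨u, hu, n, hn, rfl⟩ := hxUN
  have hnS : n ∈ S := by simpa using mul_mem (inv_mem (hUS hu)) hxS
  exact mul_mem (mem_sup_left hu) (mem_sup_right ⟨hn, hnS⟩)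

theorem subgroupOf_sup_subgroupOf_eq_top_iff {U S : Subgroup G} (N : Subgroup G) [N.Normal]
    (hUS : U ≤ S) :
    U.subgroupOf S ⊔ N.subgroupOf S = ⊤ ↔ U ⊔ N = S ⊔ N := by
  rw [← (map_injective S.subtype_injective).eq_iff, map_sup, map_subgroupOf_eq_of_le hUS,
    subgroupOf_map_subtype, map_subtype_top, ← sup_normal_inf_assoc_of_le N hUS, inf_eq_right]
  exact ⟨fun h => le_antisymm (sup_le_sup_right hUS N) (sup_le h le_sup_right),
    fun h => le_sup_left.trans h.ge⟩

end Subgroup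

open Subgroup

theorem subgroupMoebius_subgroupOf {G : Type*} [Group G] [Finite G] {U S : Subgroup G}
    (hUS : U ≤ S) :
    subgroupMoebius S (U.subgroupOf S) ⊤ = subgroupMoebius G U S := by
  let : Fintype (Subgroup G) := Fintype.ofFinite _
  let : Fintype (Subgroup S) := Fintype.ofFinite _
  let : LocallyFiniteOrder (Subgroup G) := Fintype.toLocallyFiniteOrder
  let : LocallyFiniteOrder (Subgroup S) := Fintype.toLocallyFiniteOrder
  let f : Subgroup S ↪o Subgroup G :=
    OrderEmbedding.ofMapLEIff (map S.subtype) fun _ _ => map_subtype_le_map_subtype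
  have hf : Set.Icc (f (U.subgroupOf S)) (f ⊤) ⊆ Set.range f := fun K hK =>
    ⟨K.subgroupOf S, map_subgroupOf_eq_of_le (hK.2.trans_eq (map_subtype_top S))⟩
  have h := IncidenceAlgebra.mu_apply_orderEmbedding (𝕜 := ℚ) f hf
  simp only [f, OrderEmbedding.coe_ofMapLEIff, map_subgroupOf_eq_of_le hUS,
    map_subtype_top] at h
  exact h.symm

theorem sum_card_mul_subgroupMoebius_eq_card_mul_mBouc {G : Type*} [Group G] [Finite G]
    [Fintype (Subgroup G)] (S N : Subgroup G) [N.Normal] :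
    ∑ U ∈ Finset.univ.filter (fun U : Subgroup G => U ≤ S ∧ U ⊔ N = S ⊔ N),
        (Nat.card U : ℚ) * subgroupMoebius G U S =
      Nat.card S * mBouc S (N.subgroupOf S) := by
  let : Fintype (Subgroup S) := Fintype.ofFinite _
  have hS : (Nat.card S : ℚ) ≠ 0 := Nat.cast_ne_zero.2 Nat.card_pos.ne'
  rw [mBouc, ← mul_assoc, mul_one_div_cancel hS, one_mul]
  symm
  refine Finset.sum_nbij' (map S.subtype) (subgroupOf · S) ?_ ?_ ?_ ?_ ?_
  · intro X hX
    simp only [Finset.mem_filter, Finset.mem_univ, true_and] at hX ⊢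
    refine ⟨map_subtype_le X, ?_⟩
    rwa [← subgroupOf_sup_subgroupOf_eq_top_iff N (map_subtype_le X), map_subtype_subgroupOf]
  · intro U hU
    simp only [Finset.mem_filter, Finset.mem_univ, true_and] at hU ⊢
    exact (subgroupOf_sup_subgroupOf_eq_top_iff N hU.1).2 hU.2
  · intro X _
    exact map_subtype_subgroupOf S X
  · intro U hU
    exact map_subgroupOf_eq_of_le (Finset.mem_filter.1 hU).2.1
  · intro X _
    rw [← subgroupMoebius_subgroupOf (map_subtype_le X), map_subtype_subgroupOf,
      Nat.card_congr (equivMapOfInjective X S.subtype S.subtype_injective).toEquiv]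

/-- m(G,S,N) = ([N_G(SN):SN] / [N_G(S):S]) · m(S, S∩N) · m°(G,S,N). -/
theorem mSlice_factorization (G : Type*) [Group G] [Finite G] (S N : Subgroup G)
    [N.Normal] :
    mSlice G S N =
      (((S ⊔ N).relIndex (Subgroup.normalizer ((S ⊔ N : Subgroup G) : Set G)) : ℚ) / (S.relIndex (Subgroup.normalizer (S : Set G)) : ℚ)) *
        mBouc ↥S (N.subgroupOf S) * mCirc G S N := by
  let : Fintype (Subgroup G) := Fintype.ofFinite _
  have hSN :=
    card_mul_relIndex (le_normalizer : S ⊔ N ≤ normalizer ((S ⊔ N : Subgroup G) : Set G))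
  have hS := card_mul_relIndex (le_normalizer : S ≤ normalizer (S : Set G))
  have hSN₀ : (Nat.card (S ⊔ N : Subgroup G) : ℚ) ≠ 0 := Nat.cast_ne_zero.2 Nat.card_pos.ne'
  have hS₀ : (Nat.card S : ℚ) ≠ 0 := Nat.cast_ne_zero.2 Nat.card_pos.ne'
  have hindex₀ : (S.relIndex (normalizer (S : Set G)) : ℚ) ≠ 0 :=
    Nat.cast_ne_zero.2 isFiniteRelIndex_of_finiteIndex.relIndex_ne_zero
  rw [mSlice, ← Finset.sum_mul_sum, sum_card_mul_subgroupMoebius_eq_card_mul_mBouc, mCirc,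
    ← hSN, ← hS]
  push_cast
  field_simp
end

section
/- Let G be a finite group and let N be a nontrivial minimal normal subgroup of G which is abelian. Then Σ_{X ≤ G, XN = G} μ(X,G) = 1 − |K_G(N)|, where K_G(N) is the set of complements of N in G; consequently m(G,1,N) = (1 − |K_G(N)|)/|N|. -/
/-!
If `VN = G` with `V` proper, then `V ∩ N` is normalized by `V` and, `N` being abelian, by `N`;
so it is normal in `G`, and minimality of `N` forces `V ∩ N = 1`. Hence the proper supplements
of `N` are exactly its complements, and by Dedekind's law each of them is a maximal subgroup,
so `μ(V, G) = -1`. For `S = 1` the only `U` in the sum defining `m(G,1,N)` is `U = 1`, which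
reduces `m(G,1,N)` to `m°(G,1,N) / |N|`.
-/

open scoped Classical

namespace IncidenceAlgebra

lemma mu_of_covBy {𝕜 α : Type*} [AddCommGroup 𝕜] [One 𝕜] [PartialOrder α]
    [LocallyFiniteOrder α] [DecidableEq α] {a b : α} (h : a ⋖ b) : mu 𝕜 a b = -1 := by
  have hIco : Finset.Ico a b = {a} := by
    rw [← Finset.coe_inj, Finset.coe_Ico, Finset.coe_singleton, h.Ico_eq]
  rw [mu_eq_neg_sum_Ico_of_ne h.ne, hIco, Finset.sum_singleton, mu_self]

end IncidenceAlgebra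

section Moebius
variable {G : Type*} [Group G] [Finite G]

lemma subgroupMoebius_self (A : Subgroup G) : subgroupMoebius G A A = 1 := by
  let : Fintype (Subgroup G) := Fintype.ofFinite _
  let : LocallyFiniteOrder (Subgroup G) := Fintype.toLocallyFiniteOrder
  exact IncidenceAlgebra.mu_self A

lemma subgroupMoebius_of_covBy {A B : Subgroup G} (h : A ⋖ B) : subgroupMoebius G A B = -1 := by
  let : Fintype (Subgroup G) := Fintype.ofFinite _
  let : LocallyFiniteOrder (Subgroup G) := Fintype.toLocallyFiniteOrder
  exact IncidenceAlgebra.mu_of_covBy h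

end Moebius

namespace Subgroup
variable {G : Type*} [Group G] {N V W : Subgroup G} [N.Normal]

lemma normal_inf_of_sup_eq_top (hcomm : N ≤ centralizer N) (hV : V ⊔ N = ⊤) :
    (V ⊓ N).Normal := by
  rw [← normalizer_eq_top_iff, eq_top_iff, ← hV]
  refine sup_le ?_ ?_
  · exact (le_inf V.le_normalizer le_normalizer_of_normal).trans inf_normalizer_le_normalizer_inf
  · exact hcomm.trans ((centralizer_le inf_le_right).trans (centralizer_le_normalizer _))

lemma inf_eq_bot_of_sup_eq_top
    (hmin : ∀ K : Subgroup G, K.Normal → K ≤ N → K = ⊥ ∨ K = N)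
    (hcomm : N ≤ centralizer N) (hV : V ⊔ N = ⊤) (hVtop : V ≠ ⊤) : V ⊓ N = ⊥ := by
  have hnormal := normal_inf_of_sup_eq_top hcomm hV
  refine (hmin _ hnormal inf_le_right).resolve_right fun hVN => hVtop ?_
  rw [← hV, eq_comm, sup_eq_left, ← inf_eq_right, hVN]

lemma eq_of_le_of_sup_eq_top_of_inf_eq_bot (hVW : V ≤ W) (hV : V ⊔ N = ⊤)
    (hW : W ⊓ N = ⊥) : V = W := by
  have hdedekind := mul_inf_assoc V N W hVW
  rw [inf_comm, hW, ← mul_normal, sup_bot_eq, ← mul_normal, hV, coe_top, Set.univ_inter]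
    at hdedekind
  exact SetLike.coe_injective hdedekind

lemma covBy_top_of_sup_eq_top_of_inf_eq_bot
    (hmin : ∀ K : Subgroup G, K.Normal → K ≤ N → K = ⊥ ∨ K = N)
    (hcomm : N ≤ centralizer N)
    (hN : N ≠ ⊥) (hV : V ⊔ N = ⊤) (hVN : V ⊓ N = ⊥) : V ⋖ ⊤ := by
  refine ⟨lt_top_iff_ne_top.mpr ?_, fun W hVW hWtop => hVW.ne ?_⟩
  · rintro rfl
    exact hN (by simpa using hVN)
  · have hW : W ⊔ N = ⊤ := top_unique (hV ▸ sup_le_sup_right hVW.le N)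
    exact eq_of_le_of_sup_eq_top_of_inf_eq_bot hVW.le hV
      (inf_eq_bot_of_sup_eq_top hmin hcomm hW hWtop.ne)

end Subgroup

section
open Finset Subgroup

theorem mCirc_bot_eq_one_sub_card_complements {G : Type*} [Group G] [Finite G]
    {N : Subgroup G} [N.Normal] (hN : N ≠ ⊥)
    (hmin : ∀ K : Subgroup G, K.Normal → K ≤ N → K = ⊥ ∨ K = N)
    (hcomm : N ≤ centralizer N) :
    mCirc G ⊥ N = 1 - (Nat.card {X : Subgroup G // X ⊔ N = ⊤ ∧ X ⊓ N = ⊥} : ℚ) := by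
  let : Fintype (Subgroup G) := Fintype.ofFinite _
  set K := univ.filter fun X : Subgroup G => X ⊔ N = ⊤ ∧ X ⊓ N = ⊥
  have hsupp : univ.filter (fun V : Subgroup G => ⊥ ≤ V ∧ V ⊔ N = ⊤) = insert ⊤ K := by
    ext V
    simp only [mem_filter, mem_univ, bot_le, true_and, mem_insert, K]
    by_cases hV : V = ⊤
    · simp [hV]
    · exact ⟨fun h => .inr ⟨h, inf_eq_bot_of_sup_eq_top hmin hcomm h hV⟩,
        fun h => h.resolve_left hV |>.1⟩
  have htop : ⊤ ∉ K := by simpa [K] using hN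
  have hK : ∀ V ∈ K, subgroupMoebius G V ⊤ = -1 := fun V hV =>
    subgroupMoebius_of_covBy <| covBy_top_of_sup_eq_top_of_inf_eq_bot hmin hcomm hN
      (mem_filter.mp hV).2.1 (mem_filter.mp hV).2.2
  dsimp only [mCirc]
  rw [hsupp, sum_insert htop, subgroupMoebius_self, sum_congr rfl hK, sum_const,
    Nat.card_eq_fintype_card, Fintype.card_subtype, nsmul_eq_mul]
  ring

theorem mSlice_bot_eq_mCirc_bot_div {G : Type*} [Group G] [Finite G] (N : Subgroup G)
    [N.Normal] :
    mSlice G ⊥ N = mCirc G ⊥ N / Nat.card N := by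
  let : Fintype (Subgroup G) := Fintype.ofFinite _
  have hU : univ.filter (fun U : Subgroup G => U ≤ ⊥ ∧ U ⊔ N = ⊥ ⊔ N) = {⊥} := by
    ext U
    simp +contextual
  dsimp only [mSlice, mCirc]
  rw [hU, sum_singleton, bot_sup_eq, normalizer_eq_top, normalizer_eq_top, card_top,
    card_bot, subgroupMoebius_self, Nat.cast_one]
  have hG : (Nat.card G : ℚ) ≠ 0 := Nat.cast_ne_zero.mpr Nat.card_pos.ne'
  simp only [one_mul]
  field_simp

end

/-- For a nontrivial minimal abelian normal subgroup N of G,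
Σ_{XN=G} μ(X,G) = 1 − |K_G(N)|, hence m(G,1,N) = (1 − |K_G(N)|)/|N|. -/
theorem mSlice_bot_of_minimal_abelian_normal (G : Type*) [Group G] [Finite G]
    (N : Subgroup G) [N.Normal] (hN : N ≠ ⊥)
    (hmin : ∀ K : Subgroup G, K.Normal → K ≤ N → K = ⊥ ∨ K = N)
    (habel : ∀ x ∈ N, ∀ y ∈ N, x * y = y * x) :
    mCirc G ⊥ N =
        1 - (Nat.card {X : Subgroup G // X ⊔ N = ⊤ ∧ X ⊓ N = ⊥} : ℚ) ∧
      mSlice G ⊥ N =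
        (1 - (Nat.card {X : Subgroup G // X ⊔ N = ⊤ ∧ X ⊓ N = ⊥} : ℚ)) /
          (Nat.card N : ℚ) := by
  have hcomm : N ≤ Subgroup.centralizer N := fun x hx =>
    Subgroup.mem_centralizer_iff.mpr fun y hy => habel y hy x hx
  have hcirc := mCirc_bot_eq_one_sub_card_complements hN hmin hcomm
  exact ⟨hcirc, by rw [mSlice_bot_eq_mCirc_bot_div, hcirc]⟩
end

section
/- Let G be a finite group, let S be a subgroup of G, and let N be a normal subgroup of G. Then m°(G,S,N) = m°(G/Φ(G), SΦ(G)/Φ(G), NΦ(G)/Φ(G)), where Φ(G) is the Frattini subgroup of G and the right-hand side is computed in the quotient group G/Φ(G) with its Möbius function. -/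
open scoped Classical

/-!
By Hall's theorem, `μ(V, G) = 0` unless `V` contains `Φ(G)`: otherwise `a = VΦ(G)` is proper,
and Weisner's identity `∑_{Y ≥ V, Y ∩ a = V} μ(Y, G) = 0` expresses `μ(V, G)` through
values `μ(Y, G)` with `Y > V`, `Φ(G) ≰ Y`, which vanish by induction. So only subgroups
containing `Φ(G)` contribute to `m°(G,S,N)`. The correspondence theorem identifies them with
the subgroups of `G/Φ(G)`; it preserves the Möbius function (it maps intervals onto intervals),
the condition `S ≤ V`, and, since `Φ(G)` is non-generating, the condition `VN = G`.
-/

open Finset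

namespace IncidenceAlgebra

variable {𝕜 α β : Type*} [Ring 𝕜]

section Embedding

variable [PartialOrder α] [PartialOrder β] [LocallyFiniteOrder α] [LocallyFiniteOrder β]
  [DecidableEq α] [DecidableEq β]

theorem mu_map_of_ordConnected_range (e : α ↪o β) (he : (Set.range e).OrdConnected) (a b : α) :
    mu 𝕜 (e a) (e b) = mu 𝕜 a b := by
  have map_Icc : ∀ a b, (Icc a b).map e.toEmbedding = Icc (e a) (e b) := fun a b =>
    coe_injective (by simpa using e.image_Icc he a b)
  let : DecidableLE α := Classical.decRel _
  -- `μ ∘ e` is again a left inverse of `ζ`, because `e` maps intervals onto intervals.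
  let pullback : IncidenceAlgebra 𝕜 α :=
    { toFun := fun a b => mu 𝕜 (e a) (e b)
      eq_zero_of_not_le' := fun a b hab => apply_eq_zero_of_not_le (by simpa using hab) _ }
  have pullback_mul_zeta : pullback * zeta 𝕜 = 1 := by
    ext a b
    simp only [mul_boole, one_apply, mul_apply, zeta_apply]
    calc ∑ x ∈ Icc a b, (if x ≤ b then pullback a x else 0)
        = ∑ x ∈ Icc a b, mu 𝕜 (e a) (e x) :=
          sum_congr rfl fun x hx => if_pos (mem_Icc.1 hx).2
      _ = ∑ y ∈ Icc (e a) (e b), mu 𝕜 (e a) y := by rw [← map_Icc, sum_map]; rfl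
      _ = if a = b then 1 else 0 := by rw [sum_Icc_mu_right]; simp only [e.eq_iff_eq]
  have pullback_eq_mu : pullback = mu 𝕜 := by
    rw [← one_mul (mu 𝕜), ← pullback_mul_zeta, mul_assoc, zeta_mul_mu, mul_one]
  exact congr($pullback_eq_mu a b)

end Embedding

/-- Weisner's theorem, in its dual form. -/
theorem sum_mu_top_filter_inf_eq_eq_zero [Lattice α] [OrderTop α] [LocallyFiniteOrder α]
    [DecidableEq α] {a : α} (ha : a ≠ ⊤) (x : α) :
    ∑ y ∈ Icc x ⊤ with y ⊓ a = x, mu 𝕜 y ⊤ = 0 := by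
  calc ∑ y ∈ Icc x ⊤ with y ⊓ a = x, mu 𝕜 y ⊤
      = ∑ y ∈ Icc x ⊤, ∑ z ∈ Icc x (y ⊓ a), mu 𝕜 x z * mu 𝕜 y ⊤ := by
        rw [sum_filter]
        refine sum_congr rfl fun y _ => ?_
        rw [← sum_mul, sum_Icc_mu_right, ite_mul, one_mul, zero_mul]
        exact if_congr eq_comm rfl rfl
    _ = ∑ z ∈ Icc x a, ∑ y ∈ Icc z ⊤, mu 𝕜 x z * mu 𝕜 y ⊤ := by
        refine sum_comm' fun y z => ?_
        simp only [mem_Icc, le_top, and_true, le_inf_iff]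
        exact ⟨fun ⟨_, hxz, hzy, hza⟩ => ⟨hzy, hxz, hza⟩,
          fun ⟨hzy, hxz, hza⟩ => ⟨hxz.trans hzy, hxz, hzy, hza⟩⟩
    _ = 0 := sum_eq_zero fun z hz => by
        rw [← mul_sum, sum_Icc_mu_left, if_neg (ne_top_of_le_ne_top ha (mem_Icc.1 hz).2),
          mul_zero]

theorem mu_top_eq_zero_of_not_radical_le [CompleteLattice α] [IsCoatomic α]
    [LocallyFiniteOrder α] [DecidableEq α] {x : α} (hx : ¬ Order.radical α ≤ x) :
    mu 𝕜 x ⊤ = 0 := by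
  set a := x ⊔ Order.radical α
  have ha : a ≠ ⊤ := fun h => hx (Order.radical_nongenerating h ▸ le_top)
  have hx_mem : x ∈ {y ∈ Icc x ⊤ | y ⊓ a = x} := by simp [a]
  have weisner := sum_mu_top_filter_inf_eq_eq_zero (𝕜 := 𝕜) ha x
  rwa [sum_eq_single_of_mem x hx_mem fun y hy hyx => ?_] at weisner
  obtain ⟨⟨hxy, -⟩, hya⟩ := mem_filter.1 hy |>.imp_left mem_Icc.1
  have hxy : x < y := lt_of_le_of_ne hxy (Ne.symm hyx)
  -- The other terms vanish by induction: `y` cannot contain the radical, or else `y ⊓ a = a`.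
  have hy_rad : ¬ Order.radical α ≤ y := fun h => by
    have : a = x := (inf_eq_right.2 (sup_le hxy.le h)).symm.trans hya
    exact hx (this ▸ le_sup_right)
  exact mu_top_eq_zero_of_not_radical_le hy_rad
termination_by #(Icc x ⊤)
decreasing_by exact card_lt_card (Icc_ssubset_Icc_left le_top hxy le_rfl)

end IncidenceAlgebra

namespace QuotientGroup

open IncidenceAlgebra

variable {G : Type*} [Group G]

theorem mu_comap_mk' {𝕜 : Type*} [Ring 𝕜] (N : Subgroup G) [N.Normal]
    [LocallyFiniteOrder (Subgroup G)] [LocallyFiniteOrder (Subgroup (G ⧸ N))]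
    [DecidableEq (Subgroup G)] [DecidableEq (Subgroup (G ⧸ N))] (A B : Subgroup (G ⧸ N)) :
    mu 𝕜 (A.comap (mk' N)) (B.comap (mk' N)) = mu 𝕜 A B := by
  let e : Subgroup (G ⧸ N) ↪o Subgroup G :=
    (comapMk'OrderIso N).toOrderEmbedding.trans (OrderEmbedding.subtype _)
  have range_e : Set.range e = Set.Ici N := by
    ext H
    refine ⟨?_, fun h => ⟨(comapMk'OrderIso N).symm ⟨H, h⟩, ?_⟩⟩
    · rintro ⟨W, rfl⟩
      exact le_comap_mk' N W
    · simp [e]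
  exact mu_map_of_ordConnected_range e (range_e ▸ Set.ordConnected_Ici) A B

theorem comap_map_mk'_of_le (N : Subgroup G) [N.Normal] {H : Subgroup G} (h : N ≤ H) :
    (H.map (mk' N)).comap (mk' N) = H := by
  rw [comap_map_mk', sup_eq_right.2 h]

theorem map_mk'_frattini_eq_top_iff [IsCoatomic (Subgroup G)] {K : Subgroup G} :
    K.map (mk' (frattini G)) = ⊤ ↔ K = ⊤ := by
  refine ⟨fun h => frattini_nongenerating ?_,
    fun h => h ▸ Subgroup.map_top_of_surjective _ (mk'_surjective _)⟩
  rw [sup_comm, ← comap_map_mk', h, Subgroup.comap_top]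

theorem sup_map_mk'_frattini_eq_top_iff [IsCoatomic (Subgroup G)] (W : Subgroup (G ⧸ frattini G))
    (N : Subgroup G) :
    W ⊔ N.map (mk' (frattini G)) = ⊤ ↔ W.comap (mk' (frattini G)) ⊔ N = ⊤ := by
  rw [← map_mk'_frattini_eq_top_iff (K := W.comap (mk' (frattini G)) ⊔ N), Subgroup.map_sup,
    Subgroup.map_comap_eq_self_of_surjective (mk'_surjective _)]

end QuotientGroup

open QuotientGroup IncidenceAlgebra

theorem mCirc_frattini_quotient_general (G : Type*) [Group G] [Finite G] (S N : Subgroup G) :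
    mCirc G S N =
      mCirc (G ⧸ frattini G) (S.map (QuotientGroup.mk' (frattini G)))
        (N.map (QuotientGroup.mk' (frattini G))) := by
  let : Fintype (Subgroup G) := Fintype.ofFinite _
  let : LocallyFiniteOrder (Subgroup G) := Fintype.toLocallyFiniteOrder
  let : Fintype (Subgroup (G ⧸ frattini G)) := Fintype.ofFinite _
  let : LocallyFiniteOrder (Subgroup (G ⧸ frattini G)) := Fintype.toLocallyFiniteOrder
  set π := mk' (frattini G)
  have frattini_le_of_mu_ne_zero :
      ∀ V ∈ univ.filter (fun V : Subgroup G => S ≤ V ∧ V ⊔ N = ⊤),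
        mu ℚ V ⊤ ≠ 0 → frattini G ≤ V :=
    fun V _ h => not_not.1 (mt mu_top_eq_zero_of_not_radical_le h)
  simp only [mCirc, subgroupMoebius]
  rw [← sum_filter_of_ne frattini_le_of_mu_ne_zero, filter_filter]
  refine (sum_nbij' (Subgroup.comap π) (Subgroup.map π) ?_ ?_ ?_ ?_ ?_).symm
  · intro W hW
    simp only [mem_filter, mem_univ, true_and] at hW ⊢
    exact ⟨⟨Subgroup.map_le_iff_le_comap.1 hW.1,
      (sup_map_mk'_frattini_eq_top_iff W N).1 hW.2⟩, le_comap_mk' _ W⟩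
  · intro V hV
    simp only [mem_filter, mem_univ, true_and] at hV ⊢
    obtain ⟨⟨hSV, hVN⟩, hV⟩ := hV
    exact ⟨Subgroup.map_mono hSV,
      (sup_map_mk'_frattini_eq_top_iff _ N).2 (by rwa [comap_map_mk'_of_le _ hV])⟩
  · exact fun W _ => Subgroup.map_comap_eq_self_of_surjective (mk'_surjective _) W
  · exact fun V hV => comap_map_mk'_of_le _ (mem_filter.1 hV).2.2
  · intro W _
    rw [← mu_comap_mk', Subgroup.comap_top]

/-- m°(G,S,N) = m°(G/Φ(G), SΦ(G)/Φ(G), NΦ(G)/Φ(G)). -/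
theorem mCirc_frattini_quotient (G : Type*) [Group G] [Finite G] (S N : Subgroup G)
    [N.Normal] :
    mCirc G S N =
      mCirc (G ⧸ frattini G) (S.map (QuotientGroup.mk' (frattini G)))
        (N.map (QuotientGroup.mk' (frattini G))) :=
  mCirc_frattini_quotient_general G S N
end

section
/- Let p be a prime, let G be a finite p-group, let S be a subgroup of G, and let N be a normal subgroup of G. Then m°(G,S,N) = 0 if and only if S ≠ G and SN = G. -/
open scoped Classical

/-! If `S ⊔ N = ⊤`, every `V ≥ S` satisfies `V ⊔ N = ⊤`, so `m°(G,S,N) = ∑_{S ≤ V} μ(V,G)`, which is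
`1` for `S = G` and `0` otherwise. If `S ⊔ N ≠ ⊤`, we show `m°(G,S,N) ≡ 1 (mod p)`.

In a `p`-group the number of maximal subgroups above a proper subgroup `H` is `≡ 1 (mod p)`: the
nontrivial homomorphisms `G → ℤ/p` vanishing on `H` are the nonidentity elements of a nontrivial
`p`-group, so there are `≡ -1` of them, and sorting them by kernel gives one class of the same kind
for each maximal `M ≥ H`. Going down from the top, this forces `μ(V,G) ≡ 0` unless `V = G` or `V`
is maximal (`μ(V,G) = -1`). Hence `m°(G,S,N) ≡ 1 - #{M maximal | S ≤ M, M ⊔ N = G}`, and a maximal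
`M ≥ S` fails `M ⊔ N = G` exactly when `M ≥ S ⊔ N`, so this count is `≡ 1 - 1 = 0`. -/

namespace IncidenceAlgebra

open Finset

section Map

variable {𝕜 𝕝 F α : Type*} [AddCommGroup 𝕜] [One 𝕜] [AddCommGroup 𝕝] [One 𝕝]
  [FunLike F 𝕜 𝕝] [AddMonoidHomClass F 𝕜 𝕝] [OneHomClass F 𝕜 𝕝]
  [Preorder α] [LocallyFiniteOrder α] [DecidableEq α]

theorem map_mu (f : F) (a b : α) : f (mu 𝕜 a b) = mu 𝕝 a b := by
  rw [mu_apply, mu_apply]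
  split_ifs
  · exact map_one f
  · rw [map_neg, map_sum]
    exact congrArg _ (sum_congr rfl fun x hx => map_mu f a x)
termination_by (Icc a b).card
decreasing_by
  obtain ⟨hax, hxb⟩ := mem_Ico.1 hx
  exact card_lt_card (Icc_ssubset_Icc_right (hax.trans hxb.le) le_rfl hxb)

end Map

section Coatoms

variable {R α : Type*} [Ring R] [PartialOrder α] [OrderTop α] [LocallyFiniteOrder α]
  [DecidableEq α]

theorem mu_top_of_ncard_coatoms
    (hcoat : ∀ x : α, x ≠ ⊤ → ({m | IsCoatom m ∧ x ≤ m}.ncard : R) = 1) (x : α) :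
    mu R x ⊤ = (if x = ⊤ then 1 else 0) - (if IsCoatom x then 1 else 0) := by
  by_cases hx : x = ⊤
  · simp [hx, IsCoatom]
  have htop : ⊤ ∈ Ioc x ⊤ := mem_Ioc.2 ⟨lt_top_iff_ne_top.2 hx, le_rfl⟩
  rw [mu_eq_neg_sum_Ioc_of_ne hx, sum_congr rfl fun y _ => mu_top_of_ncard_coatoms hcoat y,
    sum_sub_distrib, sum_ite_eq', sum_boole, if_pos htop, if_neg hx]
  by_cases hxc : IsCoatom x
  · have : {y ∈ Ioc x ⊤ | IsCoatom y} = ∅ :=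
      filter_eq_empty_iff.2 fun y hy hyc => hyc.1 (hxc.2 y (mem_Ioc.1 hy).1)
    rw [this]
    simp [hxc]
  · have : {m | IsCoatom m ∧ x ≤ m} = ({y ∈ Ioc x ⊤ | IsCoatom y} : Finset α) := by
      ext y
      simp only [coe_filter, mem_Ioc, le_top, and_true, Set.mem_ofPred_eq]
      exact ⟨fun h => ⟨h.2.lt_of_ne (fun e => hxc (e ▸ h.1)), h.1⟩, fun h => ⟨h.2, h.1.le⟩⟩
    rw [← Set.ncard_coe_finset, ← this, hcoat x hx]
    simp [hxc]
termination_by (Icc x ⊤).card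
decreasing_by
  exact card_lt_card (Icc_ssubset_Icc_left le_top (mem_Ioc.1 ‹_›).1 le_rfl)

theorem sum_mu_top_of_ncard_coatoms
    (hcoat : ∀ x : α, x ≠ ⊤ → ({m | IsCoatom m ∧ x ≤ m}.ncard : R) = 1) (s : Finset α) :
    ∑ v ∈ s, mu R v ⊤ = (if ⊤ ∈ s then 1 else 0) - #{v ∈ s | IsCoatom v} := by
  simp_rw [mu_top_of_ncard_coatoms hcoat, sum_sub_distrib, sum_ite_eq', sum_boole]

end Coatoms

section Sup

variable {R α : Type*} [Ring R] [Lattice α] [OrderTop α] [LocallyFiniteOrder α] [DecidableEq α]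

theorem sum_mu_top_sup_eq_top_of_sup_eq_top {a b : α} (hab : a ⊔ b = ⊤) :
    ∑ v ∈ Icc a ⊤ with v ⊔ b = ⊤, mu R v ⊤ = if a = ⊤ then 1 else 0 := by
  rw [filter_true_of_mem fun v hv => top_unique (hab ▸ sup_le_sup_right (mem_Icc.1 hv).1 b),
    sum_Icc_mu_left]

theorem sum_mu_top_sup_eq_top_of_ncard_coatoms
    (hcoat : ∀ x : α, x ≠ ⊤ → ({m | IsCoatom m ∧ x ≤ m}.ncard : R) = 1)
    {a b : α} (hab : a ⊔ b ≠ ⊤) :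
    ∑ v ∈ Icc a ⊤ with v ⊔ b = ⊤, mu R v ⊤ = 1 := by
  have ha : a ≠ ⊤ := fun h => hab (h ▸ top_sup_eq b)
  have htop : ⊤ ∈ {v ∈ Icc a ⊤ | v ⊔ b = ⊤} := by simp
  have hsplit : {m | IsCoatom m ∧ a ≤ m} =
      ↑{v ∈ {v ∈ Icc a ⊤ | v ⊔ b = ⊤} | IsCoatom v} ∪ {m | IsCoatom m ∧ a ⊔ b ≤ m} := by
    ext m
    simp only [coe_filter, mem_filter, mem_Icc, le_top, and_true, sup_le_iff,
      Set.mem_ofPred_eq, Set.mem_union]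
    by_cases hm : IsCoatom m
    · simp only [hm, true_and, ← codisjoint_iff, ← hm.not_le_iff_codisjoint]
      tauto
    · simp [hm]
  have hdisj : Disjoint (↑{v ∈ {v ∈ Icc a ⊤ | v ⊔ b = ⊤} | IsCoatom v} : Set α)
      {m | IsCoatom m ∧ a ⊔ b ≤ m} := by
    refine Set.disjoint_left.2 fun m hm hm' => ?_
    simp only [coe_filter, mem_filter, Set.mem_ofPred_eq] at hm hm'
    exact hm.2.1 ((sup_eq_left.2 (sup_le_iff.1 hm'.2).2).symm.trans hm.1.2)
  have hfin : {m | IsCoatom m ∧ a ⊔ b ≤ m}.Finite :=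
    (Set.finite_Icc (a ⊔ b) ⊤).subset fun m hm => ⟨hm.2, le_top⟩
  have hcard := congrArg (Nat.cast : ℕ → R) (Set.ncard_union_eq hdisj (ht := hfin))
  rw [← hsplit, Set.ncard_coe_finset, Nat.cast_add, hcoat a ha, hcoat _ hab, eq_comm,
    add_eq_right] at hcard
  rw [sum_mu_top_of_ncard_coatoms hcoat, if_pos htop, hcard, sub_zero]

end Sup

end IncidenceAlgebra

namespace Subgroup

variable {G : Type*} [Group G]

theorem isCoatom_of_index_prime {H : Subgroup G} (hH : H.index.Prime) : IsCoatom H := by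
  have : H.FiniteIndex := ⟨hH.ne_zero⟩
  refine ⟨fun h => hH.ne_one (index_eq_one.2 h), fun K hK => ?_⟩
  rcases hH.eq_one_or_self_of_dvd _ (index_dvd_of_le hK.le) with h | h
  · exact index_eq_one.1 h
  · exact absurd h (index_strictAnti hK).ne

theorem isCoatom_iff_isSimpleOrder_quotient (M : Subgroup G) [M.Normal] :
    IsCoatom M ↔ IsSimpleOrder (Subgroup (G ⧸ M)) :=
  Set.isSimpleOrder_Ici_iff_isCoatom.symm.trans
    (OrderIso.isSimpleOrder_iff (β := Set.Ici M) (QuotientGroup.comapMk'OrderIso M)).symm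

end Subgroup

namespace IsPGroup

variable {p : ℕ} [Fact p.Prime] {G : Type*} [Group G] [Finite G]

theorem card_eq_of_isSimpleOrder (hG : IsPGroup p G) [IsSimpleOrder (Subgroup G)] :
    Nat.card G = p := by
  have : Nontrivial G := Subgroup.nontrivial_iff.1 inferInstance
  obtain ⟨n, hn, hcard⟩ := hG.nontrivial_iff_card.1 ‹_›
  obtain ⟨K, hK⟩ := Sylow.exists_subgroup_card_pow_prime p (n := 1)
    (by rw [hcard]; exact pow_dvd_pow p hn)
  rcases eq_bot_or_eq_top K with rfl | rfl
  · exact absurd hK (by simpa using (Fact.out : p.Prime).ne_one.symm)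
  · rwa [Subgroup.card_top, pow_one] at hK

theorem normal_of_isCoatom (hG : IsPGroup p G) {M : Subgroup G} (hM : IsCoatom M) : M.Normal :=
  have := hG.isNilpotent
  Subgroup.NormalizerCondition.normal_of_coatom M Group.normalizerCondition_of_isNilpotent hM

theorem index_eq_of_isCoatom (hG : IsPGroup p G) {M : Subgroup G} (hM : IsCoatom M) :
    M.index = p :=
  have := hG.normal_of_isCoatom hM
  have := M.isCoatom_iff_isSimpleOrder_quotient.1 hM
  (hG.to_quotient M).card_eq_of_isSimpleOrder

end IsPGroup

section HomsToZModP

open Finset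

variable {p : ℕ} {G : Type*} [Group G]

local notation "Cₚ" => Multiplicative (ZMod p)

theorem card_multiplicative_zmod : Nat.card Cₚ = p :=
  (Nat.card_congr Multiplicative.toAdd).trans (Nat.card_zmod p)

theorem isPGroup_monoidHom_multiplicative_zmod : IsPGroup p (G →* Cₚ) := fun φ =>
  ⟨1, MonoidHom.ext fun g => by
    simpa [card_multiplicative_zmod] using pow_card_eq_one' (x := φ g)⟩

theorem MonoidHom.isCoatom_ker_of_ne_one [Fact p.Prime] {φ : G →* Cₚ} (hφ : φ ≠ 1) :
    IsCoatom φ.ker := by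
  have : Fact (Nat.card Cₚ).Prime := ⟨by rw [card_multiplicative_zmod]; exact Fact.out⟩
  have hrange : φ.range = ⊤ :=
    φ.range.eq_bot_or_eq_top_of_prime_card.resolve_left (MonoidHom.range_eq_bot_iff.not.2 hφ)
  apply Subgroup.isCoatom_of_index_prime
  rw [Subgroup.index_ker, hrange, Subgroup.card_top, card_multiplicative_zmod]
  exact Fact.out

variable [Finite G]

instance [NeZero p] : Finite (G →* Cₚ) := Finite.of_injective _ DFunLike.coe_injective

variable [Fact p.Prime]

theorem IsPGroup.exists_ker_eq_of_isCoatom (hG : IsPGroup p G) {M : Subgroup G}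
    (hM : IsCoatom M) : ∃ φ : G →* Cₚ, φ.ker = M := by
  have := hG.normal_of_isCoatom hM
  let e : G ⧸ M ≃* Cₚ :=
    mulEquivOfPrimeCardEq (hG.index_eq_of_isCoatom hM) card_multiplicative_zmod
  exact ⟨(e : G ⧸ M →* Cₚ).comp (QuotientGroup.mk' M), by
    rw [MonoidHom.ker_mulEquiv_comp, QuotientGroup.ker_mk']⟩

theorem IsPGroup.ncard_nontrivial_homs_le_ker (hG : IsPGroup p G) {K : Subgroup G}
    (hK : K ≠ ⊤) : ({φ : G →* Cₚ | φ ≠ 1 ∧ K ≤ φ.ker}.ncard : ZMod p) = -1 := by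
  set E := (MonoidHom.compHom' K.subtype : (G →* Cₚ) →* K →* Cₚ).ker
  have hmem (φ : G →* Cₚ) : φ ∈ E ↔ K ≤ φ.ker := by
    simp [E, MonoidHom.ext_iff, SetLike.le_def]
  obtain ⟨M, hM, hKM⟩ := (eq_top_or_exists_le_coatom K).resolve_left hK
  obtain ⟨φ, rfl⟩ := hG.exists_ker_eq_of_isCoatom hM
  have hE : Nontrivial E := E.nontrivial_iff_exists_ne_one.2
    ⟨φ, (hmem φ).2 hKM, fun h => hM.1 (MonoidHom.ker_eq_top_iff.2 h)⟩
  obtain ⟨n, hn, hcard⟩ :=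
    (isPGroup_monoidHom_multiplicative_zmod.to_subgroup E).nontrivial_iff_card.1 hE
  have hset : {φ : G →* Cₚ | φ ≠ 1 ∧ K ≤ φ.ker} = (E : Set (G →* Cₚ)) \ {1} := by
    ext φ
    simp [hmem, and_comm]
  have := congrArg (Nat.cast : ℕ → ZMod p) (Set.ncard_sdiff_singleton_add_one E.one_mem)
  rw [← hset, Nat.cast_add, ← Nat.card_coe_set_eq (E : Set (G →* Cₚ)), SetLike.coe_sort_coe,
    hcard] at this
  exact eq_neg_of_add_eq_zero_left (by simpa [hn.ne'] using this)

theorem IsPGroup.ncard_coatoms_ge_eq_one (hG : IsPGroup p G) {H : Subgroup G} (hH : H ≠ ⊤) :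
    ({M : Subgroup G | IsCoatom M ∧ H ≤ M}.ncard : ZMod p) = 1 := by
  let := Fintype.ofFinite (G →* Cₚ)
  let := Fintype.ofFinite (Subgroup G)
  have hcount (K : Subgroup G) (hK : K ≠ ⊤) :
      (#{φ : G →* Cₚ | φ ≠ 1 ∧ K ≤ φ.ker} : ZMod p) = -1 := by
    rw [← Set.ncard_coe_finset, coe_filter_univ]
    exact hG.ncard_nontrivial_homs_le_ker hK
  have hpart : #{φ : G →* Cₚ | φ ≠ 1 ∧ H ≤ φ.ker} =
      ∑ M ∈ {M : Subgroup G | IsCoatom M ∧ H ≤ M}, #{φ : G →* Cₚ | φ ≠ 1 ∧ M ≤ φ.ker} := by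
    rw [card_eq_sum_card_fiberwise (f := MonoidHom.ker) fun φ hφ => ?_]
    · refine sum_congr rfl fun M hM => congrArg card ?_
      rw [filter_filter]
      refine filter_congr fun φ _ => ?_
      obtain ⟨hMc, hHM⟩ := (mem_filter.1 hM).2
      constructor
      · rintro ⟨⟨hφ, -⟩, rfl⟩
        exact ⟨hφ, le_rfl⟩
      · rintro ⟨hφ, hMφ⟩
        have hker := (hMc.le_iff_eq (MonoidHom.ker_eq_top_iff.not.2 hφ)).1 hMφ
        exact ⟨⟨hφ, hHM.trans hker.ge⟩, hker⟩
    · obtain ⟨hφ, hHφ⟩ := (mem_filter.1 hφ).2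
      exact mem_filter.2 ⟨mem_univ _, MonoidHom.isCoatom_ker_of_ne_one hφ, hHφ⟩
  have := congrArg (Nat.cast : ℕ → ZMod p) hpart
  rw [Nat.cast_sum, hcount H hH, sum_congr rfl fun M hM => hcount M (mem_filter.1 hM).2.1.1,
    sum_const, nsmul_eq_mul, mul_neg_one, neg_inj, ← Set.ncard_coe_finset, coe_filter_univ]
    at this
  exact this.symm

end HomsToZModP

theorem mCirc_eq_zero_iff_general (p : ℕ) (hp : p.Prime) (G : Type*) [Group G] [Finite G]
    (hG : IsPGroup p G) (S N : Subgroup G) :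
    mCirc G S N = 0 ↔ S ≠ ⊤ ∧ S ⊔ N = ⊤ := by
  let : Fintype (Subgroup G) := Fintype.ofFinite _
  let : LocallyFiniteOrder (Subgroup G) := Fintype.toLocallyFiniteOrder
  have : Fact p.Prime := ⟨hp⟩
  have hsum : mCirc G S N = ∑ V ∈ Finset.Icc S ⊤ with V ⊔ N = ⊤, IncidenceAlgebra.mu ℚ V ⊤ := by
    simp only [mCirc, subgroupMoebius]
    congr 1
    ext V
    simp
  by_cases hSN : S ⊔ N = ⊤
  · rw [hsum, IncidenceAlgebra.sum_mu_top_sup_eq_top_of_sup_eq_top hSN]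
    simp [hSN]
  · refine iff_of_false (fun h => ?_) (fun h => hSN h.2)
    have hmod := IncidenceAlgebra.sum_mu_top_sup_eq_top_of_ncard_coatoms (R := ZMod p)
      (fun H hH => hG.ncard_coatoms_ge_eq_one hH) hSN
    simp_rw [← IncidenceAlgebra.map_mu (Int.castRingHom (ZMod p)), ← map_sum] at hmod
    simp_rw [hsum, ← IncidenceAlgebra.map_mu (Int.castRingHom ℚ), ← map_sum] at h
    rw [eq_intCast, Int.cast_eq_zero] at h
    rw [eq_intCast, h, Int.cast_zero] at hmod
    exact zero_ne_one hmod

/-- For a finite p-group G, a subgroup S and a normal subgroup N,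
m°(G,S,N) = 0 if and only if S ≠ G and SN = G. -/
theorem mCirc_eq_zero_iff (p : ℕ) (hp : p.Prime) (G : Type*) [Group G] [Finite G]
    (hG : IsPGroup p G) (S N : Subgroup G) [N.Normal] :
    mCirc G S N = 0 ↔ S ≠ ⊤ ∧ S ⊔ N = ⊤ :=
  mCirc_eq_zero_iff_general p hp G hG S N
end

section
/- Let G be a finite group and let N be a normal subgroup of G. Then m(G,N) = m(G/Φ(G), NΦ(G)/Φ(G)), where Φ(G) is the Frattini subgroup of G and the right-hand side is computed in the quotient group G/Φ(G) with its Möbius function. -/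
open scoped Classical

/-! Since `|X| / |G| = 1 / |G : X|`, `m(G,N)` is the sum of `μ(X,G) / |G : X|` over `X` with
`XN = G`. If `X` is properly contained in the intersection of the maximal subgroups containing
it, then `μ(X,G) = 0` (Hall); in particular this happens unless `Φ(G) ≤ X`. For a normal
`K ≤ Φ(G)`, the subgroups `X ≥ K` correspond to the subgroups of `G/K` with the same index,
the same condition `XN = G` and, the intervals `[X,G]` and `[X/K,G/K]` being isomorphic, the
same value of `μ(-,G)`. -/

open Finset IncidenceAlgebra

section Lattice

variable {𝕜 α : Type*} [Ring 𝕜] [Lattice α] [OrderTop α] [Finite α] [LocallyFiniteOrder α]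
  [DecidableEq α]

theorem mu_top_eq_zero_of_lt_of_forall_coatom {x y : α} (hxy : x < y)
    (hy : ∀ m, IsCoatom m → x ≤ m → y ≤ m) : mu 𝕜 x ⊤ = 0 := by
  induction x using WellFoundedGT.induction generalizing y with
  | _ x ih =>
  have hx : x ≠ ⊤ := hxy.ne_top
  have hy_top : y ≠ ⊤ := by
    obtain ⟨m, hm, hxm⟩ := (eq_top_or_exists_le_coatom x).resolve_left hx
    exact ne_top_of_le_ne_top hm.1 (hy m hm hxm)
  have hsum : ∑ z ∈ Icc x ⊤ \ Icc y ⊤, mu 𝕜 z ⊤ = 0 := by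
    rw [sum_sdiff_eq_sub (Icc_subset_Icc_left hxy.le), sum_Icc_mu_left, sum_Icc_mu_left,
      if_neg hx, if_neg hy_top, sub_zero]
  rw [← hsum, sum_eq_single_of_mem x (by simp [hxy.not_ge])]
  intro z hz hzx
  simp only [mem_sdiff, mem_Icc, le_top, and_true] at hz
  -- every coatom above `z` lies above `x`, hence above `y`, hence above `z ⊔ y`
  refine ih z (lt_of_le_of_ne hz.1 (Ne.symm hzx)) (left_lt_sup.mpr hz.2) ?_
  exact fun m hm hzm => sup_le hzm (hy m hm (hz.1.trans hzm))

end Lattice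

section OrderIso

variable {𝕜 α β : Type*} [Ring 𝕜] [PartialOrder α] [OrderTop α] [LocallyFiniteOrder α]
  [DecidableEq α] [PartialOrder β] [OrderTop β] [Finite β] [LocallyFiniteOrder β] [DecidableEq β]

theorem mu_top_orderIso_Ici {a : α} (e : β ≃o Set.Ici a) (y : β) :
    mu 𝕜 (e y : α) ⊤ = mu 𝕜 y ⊤ := by
  induction y using WellFoundedGT.induction with
  | _ y ih =>
  rcases eq_or_ne y ⊤ with rfl | hy
  · rw [e.map_top]
    exact (mu_self _).trans (mu_self _).symm
  have hey : (e y : α) ≠ ⊤ := fun h => hy (e.injective (Subtype.ext (by simpa using h)))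
  have hIoc : Ioc (e y : α) ⊤ =
      (Ioc y ⊤).map ⟨fun w => (e w : α), Subtype.val_injective.comp e.injective⟩ := by
    ext z
    simp only [mem_Ioc, le_top, and_true, mem_map, Function.Embedding.coeFn_mk]
    constructor
    · intro hz
      refine ⟨e.symm ⟨z, (e y).2.trans hz.le⟩, ?_, by simp⟩
      rw [← e.lt_iff_lt, e.apply_symm_apply]
      exact hz
    · rintro ⟨w, hw, rfl⟩
      exact Subtype.coe_lt_coe.mpr (e.lt_iff_lt.mpr hw)
  rw [mu_eq_neg_sum_Ioc_of_ne hey, mu_eq_neg_sum_Ioc_of_ne hy, hIoc, sum_map]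
  exact congrArg _ (sum_congr rfl fun w hw => ih w (mem_Ioc.mp hw).1)

end OrderIso

section Group

open Subgroup

variable {G : Type*} [Group G]

theorem map_mk'_sup_map_mk'_eq_top_iff {K X : Subgroup G} [K.Normal] (N : Subgroup G)
    (hKX : K ≤ X) :
    X.map (QuotientGroup.mk' K) ⊔ N.map (QuotientGroup.mk' K) = ⊤ ↔ X ⊔ N = ⊤ := by
  rw [← Subgroup.map_sup]
  refine ⟨fun h => ?_, fun h => h ▸ map_top_of_surjective _ (QuotientGroup.mk'_surjective K)⟩
  rw [← sup_eq_right.mpr (hKX.trans le_sup_left), ← QuotientGroup.comap_map_mk', h, comap_top]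

variable [Finite G]

attribute [local instance] Fintype.ofFinite Fintype.toLocallyFiniteOrder

theorem subgroupMoebius_top_eq_zero_of_not_frattini_le {X : Subgroup G}
    (hX : ¬frattini G ≤ X) : subgroupMoebius G X ⊤ = 0 :=
  mu_top_eq_zero_of_lt_of_forall_coatom (y := X ⊔ frattini G) (left_lt_sup.mpr hX)
    fun _ hM hXM => sup_le hXM (frattini_le_coatom hM)

theorem subgroupMoebius_map_mk'_top (K : Subgroup G) [K.Normal] {X : Subgroup G}
    (hKX : K ≤ X) :
    subgroupMoebius (G ⧸ K) (X.map (QuotientGroup.mk' K)) ⊤ = subgroupMoebius G X ⊤ := by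
  have h := mu_top_orderIso_Ici (𝕜 := ℚ) (QuotientGroup.comapMk'OrderIso K)
    (X.map (QuotientGroup.mk' K))
  exact h.symm.trans (congrArg (subgroupMoebius G · ⊤)
    ((QuotientGroup.comap_map_mk' K X).trans (sup_eq_right.mpr hKX)))

theorem mBouc_eq_sum_inv_index (N : Subgroup G) :
    mBouc G N = ∑ X ∈ univ.filter (fun X : Subgroup G => X ⊔ N = ⊤),
      (X.index : ℚ)⁻¹ * subgroupMoebius G X ⊤ := by
  rw [mBouc, mul_sum]
  refine sum_congr rfl fun X _ => ?_
  rw [← X.card_mul_index, Nat.cast_mul, ← mul_assoc, one_div, mul_inv,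
    mul_comm (Nat.card X : ℚ)⁻¹, mul_assoc _ _ (Nat.card X : ℚ),
    inv_mul_cancel₀ (Nat.cast_ne_zero.mpr Nat.card_pos.ne'), mul_one]

theorem mBouc_map_mk'_of_le_frattini (N K : Subgroup G) [K.Normal] (hK : K ≤ frattini G) :
    mBouc G N = mBouc (G ⧸ K) (N.map (QuotientGroup.mk' K)) := by
  have hsurj := QuotientGroup.mk'_surjective K
  have hker : (QuotientGroup.mk' K).ker = K := QuotientGroup.ker_mk' K
  rw [mBouc_eq_sum_inv_index, mBouc_eq_sum_inv_index,
    ← sum_subset (s₁ := univ.filter fun X : Subgroup G => K ≤ X ∧ X ⊔ N = ⊤)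
      (fun X hX => by simp_all)
      (fun X hX hKX => by
        rw [subgroupMoebius_top_eq_zero_of_not_frattini_le (fun h => by simp_all [hK.trans h]),
          mul_zero])]
  refine sum_nbij' (map (QuotientGroup.mk' K)) (comap (QuotientGroup.mk' K)) ?_ ?_ ?_ ?_ ?_
  · intro X hX
    simp only [mem_filter, mem_univ, true_and] at hX ⊢
    exact (map_mk'_sup_map_mk'_eq_top_iff N hX.1).mpr hX.2
  · intro Y hY
    simp only [mem_filter, mem_univ, true_and] at hY ⊢
    have hKY : K ≤ Y.comap (QuotientGroup.mk' K) := QuotientGroup.le_comap_mk' K Y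
    refine ⟨hKY, (map_mk'_sup_map_mk'_eq_top_iff N hKY).mp ?_⟩
    rwa [map_comap_eq_self_of_surjective hsurj]
  · intro X hX
    exact comap_map_eq_self (hker.trans_le (mem_filter.mp hX).2.1)
  · intro Y _
    exact map_comap_eq_self_of_surjective hsurj Y
  · intro X hX
    have hKX : K ≤ X := (mem_filter.mp hX).2.1
    rw [X.index_map_eq hsurj (hker.trans_le hKX), subgroupMoebius_map_mk'_top K hKX]

end Group

theorem mBouc_frattini_quotient_general (G : Type*) [Group G] [Finite G] (N : Subgroup G) :
    mBouc G N =
      mBouc (G ⧸ frattini G) (N.map (QuotientGroup.mk' (frattini G))) :=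
  mBouc_map_mk'_of_le_frattini N (frattini G) le_rfl

/-- m(G,N) = m(G/Φ(G), NΦ(G)/Φ(G)). -/
theorem mBouc_frattini_quotient (G : Type*) [Group G] [Finite G] (N : Subgroup G)
    [N.Normal] :
    mBouc G N =
      mBouc (G ⧸ frattini G) (N.map (QuotientGroup.mk' (frattini G))) :=
  mBouc_frattini_quotient_general G N
end
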